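/- arXiv:1902.02658 — 3 statements merged into one kernel-verified Lean document; each statement's English description precedes it below -/
import Mathlib

section
/- Let F_n = √(1+1/n)(N₁²−1) + √(1−1/n)(N₂²−1) with N₁, N₂ independent standard normals. Then E[F_n²] = 4 for every n, κ_4(F_n) − κ_4(G(2)) = 96/n², and κ_3(F_n) − κ_3(G(2)) = 8((1+1/n)^{3/2} + (1−1/n)^{3/2} − 2), which is asymptotically of order 1/n² (i.e. n²·(κ_3(F_n) − 16) converges to a nonzero constant as n → ∞). -/
/-!
With `a = √(1+x)`, `b = √(1-x)` and `c = ab = √(1-x²)`, the sum `u = a³ + b³` satisfies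
`u² = (1+x)³ + (1-x)³ + 2c³ = 2 + 6x² + 2c³`, and `(c³ - 1)(c³ + 1) = (1-x²)³ - 1` is `x²` times a
polynomial in `x`. Dividing by `u + 2` and `c³ + 1` writes `u - 2 = x² · q(x)` with `q` continuous
and `q 0 = 3/4`; at `x = 1/n` this gives `n²(κ₃(F_n) - 16) = 8 q(1/n) → 6`.
-/

open Filter Topology Real

noncomputable def sqrtCubeSumQuot (x : ℝ) : ℝ :=
  2 * (3 - (3 - 3 * x ^ 2 + x ^ 4) / (1 + √(1 - x ^ 2) ^ 3)) /
    (√(1 + x) ^ 3 + √(1 - x) ^ 3 + 2)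

theorem sqrt_one_add_pow_three_add_sqrt_one_sub_pow_three_sub_two {x : ℝ} (hx : |x| ≤ 1) :
    √(1 + x) ^ 3 + √(1 - x) ^ 3 - 2 = x ^ 2 * sqrtCubeSumQuot x := by
  obtain ⟨hx₁, hx₂⟩ := abs_le.mp hx
  set a := √(1 + x)
  set b := √(1 - x)
  have ha : a ^ 2 = 1 + x := sq_sqrt (by linarith)
  have hb : b ^ 2 = 1 - x := sq_sqrt (by linarith)
  have hc : √(1 - x ^ 2) = a * b := by
    rw [← sqrt_mul (by linarith)]; ring_nf
  have hu : 0 < a ^ 3 + b ^ 3 + 2 := by positivity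
  have hc₃ : 1 + a ^ 3 * b ^ 3 ≠ 0 := by positivity
  rw [sqrtCubeSumQuot, hc, mul_pow]
  field_simp
  have h6a : a ^ 6 = (1 + x) ^ 3 := by rw [← ha]; ring
  have h6b : b ^ 6 = (1 - x) ^ 3 := by rw [← hb]; ring
  have h6ab : (a * b) ^ 6 = ((1 + x) * (1 - x)) ^ 3 := by rw [← ha, ← hb]; ring
  linear_combination (1 + (a * b) ^ 3) * h6a + (1 + (a * b) ^ 3) * h6b + 2 * h6ab

theorem continuousAt_sqrtCubeSumQuot_zero : ContinuousAt sqrtCubeSumQuot 0 := by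
  unfold sqrtCubeSumQuot
  fun_prop (disch := norm_num)

theorem sqrtCubeSumQuot_zero : sqrtCubeSumQuot 0 = 3 / 4 := by
  norm_num [sqrtCubeSumQuot]

theorem tendsto_natCast_sq_mul_sqrt_cube_sum_sub_two :
    Tendsto (fun n : ℕ => (n : ℝ) ^ 2 * (√(1 + 1 / n) ^ 3 + √(1 - 1 / n) ^ 3 - 2)) atTop
      (𝓝 (3 / 4)) := by
  have hquot : Tendsto (fun n : ℕ => sqrtCubeSumQuot (1 / n)) atTop (𝓝 (3 / 4)) :=
    sqrtCubeSumQuot_zero ▸ continuousAt_sqrtCubeSumQuot_zero.tendsto.comp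
      tendsto_one_div_atTop_nhds_zero_nat
  refine hquot.congr' ?_
  filter_upwards [eventually_ge_atTop 1] with n hn
  have hx : |1 / (n : ℝ)| ≤ 1 := by
    rw [abs_of_nonneg (by positivity), div_le_one (by positivity)]; exact_mod_cast hn
  rw [sqrt_one_add_pow_three_add_sqrt_one_sub_pow_three_sub_two hx]
  field_simp

theorem sqrt_pow_three_eq_rpow {y : ℝ} (hy : 0 ≤ y) : √y ^ 3 = y ^ ((3 : ℝ) / 2) := by
  rw [rpow_div_two_eq_sqrt _ hy]; norm_cast

theorem one_sub_one_div_natCast_nonneg {n : ℕ} (hn : 1 ≤ n) : 0 ≤ 1 - 1 / (n : ℝ) := by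
  rw [sub_nonneg, div_le_one (by positivity)]; exact_mod_cast hn

/-- For `F_n = √(1+1/n)(N₁²−1) + √(1−1/n)(N₂²−1)` (with `c₁ = √(1+1/n)`,
`c₂ = √(1−1/n)`, so `κ₂ = 2(c₁²+c₂²)`, `κ₃ = 8(c₁³+c₂³)`, `κ₄ = 48(c₁⁴+c₂⁴)`):
`E[F_n²] = κ₂(F_n) = 4` for every `n ≥ 1`, `κ₄(F_n) − κ₄(G(2)) = 96/n²`, and
`n²·(κ₃(F_n) − 16)` converges to a nonzero constant as `n → ∞`. -/
theorem naive_example_cumulant_rates :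
    (∀ n : ℕ, 1 ≤ n →
        2 * (Real.sqrt (1 + 1 / n) ^ 2 + Real.sqrt (1 - 1 / n) ^ 2) = 4) ∧
      (∀ n : ℕ, 1 ≤ n →
        48 * (Real.sqrt (1 + 1 / n) ^ 4 + Real.sqrt (1 - 1 / n) ^ 4) - 96 =
          96 / (n : ℝ) ^ 2) ∧
      (∀ n : ℕ, 1 ≤ n →
        8 * (Real.sqrt (1 + 1 / n) ^ 3 + Real.sqrt (1 - 1 / n) ^ 3) - 16 =
          8 * ((1 + 1 / (n : ℝ)) ^ ((3 : ℝ) / 2) + (1 - 1 / (n : ℝ)) ^ ((3 : ℝ) / 2) - 2)) ∧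
      ∃ L : ℝ, L ≠ 0 ∧
        Tendsto
          (fun n : ℕ =>
            (n : ℝ) ^ 2 *
              (8 * (Real.sqrt (1 + 1 / n) ^ 3 + Real.sqrt (1 - 1 / n) ^ 3) - 16))
          atTop (nhds L) := by
  refine ⟨fun n hn => ?_, fun n hn => ?_, fun n hn => ?_, 6, by norm_num, ?_⟩
  · rw [sq_sqrt (by positivity), sq_sqrt (one_sub_one_div_natCast_nonneg hn)]
    ring
  · rw [show 4 = 2 * 2 from rfl, pow_mul, pow_mul, sq_sqrt (by positivity),
      sq_sqrt (one_sub_one_div_natCast_nonneg hn)]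
    field_simp
    ring
  · rw [sqrt_pow_three_eq_rpow (by positivity),
      sqrt_pow_three_eq_rpow (one_sub_one_div_natCast_nonneg hn)]
    ring
  · convert (tendsto_natCast_sq_mul_sqrt_cube_sum_sub_two.const_mul 8) using 2 <;> ring
end

section
/- For r > 0, the function f⁺(0) := (h(0) − E[h(X_r)])/r extends the function f⁺_h(x) = (1/(x p_r(x)))·∫₀ˣ (h(t) − E[h(X_r)]) p_r(t) dt continuously at 0, i.e. lim_{x→0⁺} f⁺_h(x) = (h(0) − E[h(X_r)])/r, for every Lipschitz function h : ℝ → ℝ. -/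
open MeasureTheory Real Set

/-- The Gamma(r,1) density `p_r(x) = x^{r−1} e^{−x} / Γ(r)` on `(0,∞)`. -/
noncomputable def gammaDens (r x : ℝ) : ℝ :=
  if 0 < x then x ^ (r - 1) * Real.exp (-x) / Real.Gamma r else 0

/-!
L'Hôpital's rule at `0⁺`: the numerator `∫₀ˣ g p_r` and the denominator `x p_r(x) = xʳ e⁻ˣ / Γ(r)`
both vanish at `0⁺`, and the quotient of their derivatives is
`g(x) p_r(x) / (p_r(x) (r − x)) = g(x) / (r − x) → g(0) / r` for any continuous `g`.
-/

open Filter Topology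

theorem gammaDens_eventuallyEq {r x : ℝ} (hx : 0 < x) :
    gammaDens r =ᶠ[𝓝 x] fun t => t ^ (r - 1) * exp (-t) / Gamma r := by
  filter_upwards [lt_mem_nhds hx] with t ht
  simp [gammaDens, ht]

theorem integrable_gammaDens {r : ℝ} (hr : 0 < r) : Integrable (gammaDens r) := by
  refine IntegrableOn.integrable_of_forall_notMem_eq_zero (s := Ioi 0) ?_
    fun x hx => if_neg hx
  refine IntegrableOn.congr_fun ((GammaIntegral_convergent hr).div_const (Gamma r))
    (fun x hx => ?_) measurableSet_Ioi
  simp [gammaDens, mem_Ioi.mp hx, mul_comm]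

theorem gammaDens_pos {r x : ℝ} (hr : 0 < r) (hx : 0 < x) : 0 < gammaDens r x := by
  rw [gammaDens, if_pos hx]
  have := Gamma_pos_of_pos hr
  positivity

theorem continuousAt_gammaDens {r x : ℝ} (hx : 0 < x) : ContinuousAt (gammaDens r) x := by
  refine ContinuousAt.congr ?_ (gammaDens_eventuallyEq hx).symm
  fun_prop (disch := exact Or.inl hx.ne')

theorem mul_gammaDens {r x : ℝ} (hx : 0 < x) :
    x * gammaDens r x = x ^ r * exp (-x) / Gamma r := by
  rw [gammaDens, if_pos hx, rpow_sub_one hx.ne']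
  field_simp

theorem hasDerivAt_mul_gammaDens {r x : ℝ} (hx : 0 < x) :
    HasDerivAt (fun t => t * gammaDens r t) (gammaDens r x * (r - x)) x := by
  have hderiv := ((hasDerivAt_rpow_const (p := r) (Or.inl hx.ne')).mul
    (hasDerivAt_neg x).exp).div_const (Gamma r)
  refine (hderiv.congr_of_eventuallyEq ?_).congr_deriv ?_
  · filter_upwards [lt_mem_nhds hx] with t ht
    exact mul_gammaDens ht
  · rw [gammaDens, if_pos hx, rpow_sub_one hx.ne']
    field_simp
    ring

theorem tendsto_mul_gammaDens_nhdsGT_zero {r : ℝ} (hr : 0 < r) :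
    Tendsto (fun x => x * gammaDens r x) (𝓝[>] 0) (𝓝 0) := by
  have hcont : ContinuousAt (fun x : ℝ => x ^ r * exp (-x) / Gamma r) 0 := by
    fun_prop (disch := exact Or.inr hr.le)
  have := hcont.tendsto.mono_left (nhdsWithin_le_nhds (s := Ioi 0))
  rw [zero_rpow hr.ne', zero_mul, zero_div] at this
  refine this.congr' ?_
  filter_upwards [self_mem_nhdsWithin] with x hx
  exact (mul_gammaDens hx).symm

theorem tendsto_integral_mul_gammaDens_div {r : ℝ} (hr : 0 < r) {g : ℝ → ℝ} (hg : Continuous g) :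
    Tendsto (fun x => (∫ t in (0 : ℝ)..x, g t * gammaDens r t) / (x * gammaDens r x))
      (𝓝[>] 0) (𝓝 (g 0 / r)) := by
  have hint : ∀ a b : ℝ, IntervalIntegrable (fun t => g t * gammaDens r t) volume a b :=
    fun a b => (integrable_gammaDens hr).intervalIntegrable.continuousOn_mul hg.continuousOn
  have hprim : Tendsto (fun x => ∫ t in (0 : ℝ)..x, g t * gammaDens r t) (𝓝[>] 0) (𝓝 0) := by
    simpa using ((intervalIntegral.continuous_primitive hint 0).tendsto 0).mono_left
      nhdsWithin_le_nhds
  have hderiv : ∀ x ∈ Ioo 0 r, HasDerivAt (fun x => ∫ t in (0 : ℝ)..x, g t * gammaDens r t)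
      (g x * gammaDens r x) x := fun x hx =>
    intervalIntegral.integral_hasDerivAt_right (hint 0 x)
      (hg.aestronglyMeasurable.mul
        (integrable_gammaDens hr).aestronglyMeasurable).stronglyMeasurableAtFilter
      (hg.continuousAt.mul (continuousAt_gammaDens hx.1))
  refine HasDerivAt.lhopital_zero_right_on_Ioo hr hderiv
    (fun x hx => hasDerivAt_mul_gammaDens hx.1) ?_ hprim (tendsto_mul_gammaDens_nhdsGT_zero hr) ?_
  · exact fun x hx => mul_ne_zero (gammaDens_pos hr hx.1).ne' (sub_pos.2 hx.2).ne'
  · have hlim : Tendsto (fun x => g x / (r - x)) (𝓝[>] 0) (𝓝 (g 0 / r)) := by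
      have hcont : ContinuousAt (fun x => g x / (r - x)) 0 :=
        hg.continuousAt.div (continuousAt_const.sub continuousAt_id) (by simpa using hr.ne')
      simpa using hcont.tendsto.mono_left nhdsWithin_le_nhds
    refine hlim.congr' ?_
    filter_upwards [self_mem_nhdsWithin] with x hx
    rw [mul_comm (g x), mul_div_mul_left _ _ (gammaDens_pos hr hx).ne']

/-- For `r > 0` and any Lipschitz function `h : ℝ → ℝ`, the solution
`f⁺_h(x) = (1/(x·p_r(x)))·∫₀ˣ (h(t) − E[h(X_r)]) p_r(t) dt` of the Gamma Stein
equation extends continuously at `0` with value `(h(0) − E[h(X_r)])/r`: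
`lim_{x→0⁺} f⁺_h(x) = (h(0) − E[h(X_r)])/r`, where `E[h(X_r)] = ∫_{(0,∞)} h·p_r`. -/
theorem stein_solution_continuous_extension_at_zero (r : ℝ) (hr : 0 < r)
    (h : ℝ → ℝ) (hh : ∃ L : NNReal, LipschitzWith L h) :
    Filter.Tendsto
      (fun x =>
        (∫ t in (0 : ℝ)..x, (h t - ∫ s in Ioi (0 : ℝ), h s * gammaDens r s) * gammaDens r t) /
          (x * gammaDens r x))
      (nhdsWithin 0 (Ioi 0))
      (nhds ((h 0 - ∫ s in Ioi (0 : ℝ), h s * gammaDens r s) / r)) := by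
  obtain ⟨L, hL⟩ := hh
  exact tendsto_integral_mul_gammaDens_div hr (hL.continuous.sub continuous_const)
end

section
/- Let μ and μ_ν be probability measures on ℝ with all moments finite, and suppose that for every k ≥ 0, |∫ x^k e^{itx}(μ−μ_ν)(dx)| ≤ ρ^{k+1}·d for all real t with |t| < ρ, where d ≥ 0 and ρ > 0. Then for every complex z = t + iy with |t| < ρ and |y| < e^{−1} for which both characteristic functions are defined by absolutely convergent integrals, |∫e^{izx}μ(dx) − ∫e^{izx}μ_ν(dx)| ≤ ρ·e^{ρ/e}·d. -/
/-!
Write `z = t + iy` and expand `e^{izx} = e^{-yx} e^{itx} = ∑ₖ (-y)ᵏ/k! · xᵏ e^{itx}`. Since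
`∑ₖ |yx|ᵏ/k! = e^{|y||x|} ≤ e^{c|x|}` is integrable, dominated convergence lets the sum be
integrated term by term, so the difference of the two transforms at `z` is
`∑ₖ (-y)ᵏ/k! · ∫ xᵏ e^{itx} (μ - μ_ν)(dx)`. Bounding the `k`-th term by
`e^{-k} ρ^{k+1} d / k!` and summing gives `ρ e^{ρ/e} d`.
-/

open MeasureTheory Complex

lemma Complex.hasSum_pow_div_factorial (w : ℂ) :
    HasSum (fun k : ℕ => w ^ k / k.factorial) (exp w) := by
  rw [Complex.exp_eq_exp_ℂ]
  exact NormedSpace.expSeries_div_hasSum_exp w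

lemma Real.hasSum_pow_div_factorial (a : ℝ) :
    HasSum (fun k : ℕ => a ^ k / k.factorial) (Real.exp a) := by
  rw [Real.exp_eq_exp_ℝ]
  exact NormedSpace.expSeries_div_hasSum_exp a

lemma hasSum_exp_mul_I (z : ℂ) (x : ℝ) :
    HasSum (fun k : ℕ => (-(z.im : ℂ)) ^ k / k.factorial * ((x : ℂ) ^ k * exp (z.re * x * I)))
      (exp (z * x * I)) := by
  have hsplit : exp (z * x * I) = exp (-(z.im : ℂ) * x) * exp (z.re * x * I) := by
    rw [← Complex.exp_add]
    congr 1
    conv_lhs => rw [← Complex.re_add_im z]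
    linear_combination ((z.im : ℂ) * x) * Complex.I_sq
  rw [hsplit]
  convert (Complex.hasSum_pow_div_factorial (-(z.im : ℂ) * x)).mul_right
    (exp (z.re * x * I)) using 2 with k
  · rfl
  · rw [mul_pow]
    ring

lemma norm_pow_div_factorial_mul_pow_mul_exp (y t x : ℝ) (k : ℕ) :
    ‖(-(y : ℂ)) ^ k / k.factorial * ((x : ℂ) ^ k * exp (t * x * I))‖ =
      (|y| * |x|) ^ k / k.factorial := by
  have hunit : ‖exp ((t : ℂ) * x * I)‖ = 1 := by
    rw [← Complex.ofReal_mul, Complex.norm_exp_ofReal_mul_I]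
  simp only [norm_mul, norm_div, norm_pow, norm_neg, hunit, Complex.norm_real,
    Real.norm_eq_abs, Complex.norm_natCast, mul_one, mul_pow]
  ring

lemma hasSum_integral_exp_mul_I {ν : Measure ℝ} {c : ℝ}
    (hν : Integrable (fun x => Real.exp (c * |x|)) ν) {z : ℂ} (hz : |z.im| ≤ c) :
    HasSum (fun k : ℕ => (-(z.im : ℂ)) ^ k / k.factorial *
        ∫ x, (x : ℂ) ^ k * exp (z.re * x * I) ∂ν)
      (∫ x, exp (z * x * I) ∂ν) := by
  have hdom : ∀ x : ℝ, Real.exp (|z.im| * |x|) ≤ Real.exp (c * |x|) := fun x =>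
    Real.exp_le_exp.2 (mul_le_mul_of_nonneg_right hz (abs_nonneg x))
  have hexp_int : Integrable (fun x => Real.exp (|z.im| * |x|)) ν :=
    hν.mono' (by fun_prop) (Filter.Eventually.of_forall fun x => by
      rw [Real.norm_of_nonneg (Real.exp_pos _).le]; exact hdom x)
  simp_rw [← integral_const_mul]
  refine hasSum_integral_of_dominated_convergence (fun k x => (|z.im| * |x|) ^ k / k.factorial)
    (fun k => by fun_prop) (fun k => Filter.Eventually.of_forall fun x => ?_)
    (Filter.Eventually.of_forall fun x => (Real.hasSum_pow_div_factorial _).summable) ?_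
    (Filter.Eventually.of_forall (hasSum_exp_mul_I z))
  · exact (norm_pow_div_factorial_mul_pow_mul_exp _ _ _ _).le
  · simpa only [(Real.hasSum_pow_div_factorial _).tsum_eq] using hexp_int

lemma norm_pow_div_factorial_mul_le {y r ρ d : ℝ} {D : ℂ} {k : ℕ} (hy : |y| ≤ r)
    (hD : ‖D‖ ≤ ρ ^ (k + 1) * d) :
    ‖(-(y : ℂ)) ^ k / k.factorial * D‖ ≤ ρ * d * ((ρ * r) ^ k / k.factorial) := by
  simp only [norm_mul, norm_div, norm_pow, norm_neg, Complex.norm_real, Real.norm_eq_abs,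
    Complex.norm_natCast]
  calc |y| ^ k / k.factorial * ‖D‖ ≤ r ^ k / k.factorial * (ρ ^ (k + 1) * d) := by
        refine mul_le_mul ?_ hD (norm_nonneg D) ?_
        · gcongr
        · have hr : 0 ≤ r := (abs_nonneg y).trans hy
          positivity
    _ = ρ * d * ((ρ * r) ^ k / k.factorial) := by ring

theorem norm_integral_exp_mul_I_sub_le {μ ν : Measure ℝ} {c r ρ d : ℝ}
    (hμ : Integrable (fun x => Real.exp (c * |x|)) μ)
    (hν : Integrable (fun x => Real.exp (c * |x|)) ν)
    {z : ℂ} (hzr : |z.im| ≤ r) (hrc : r ≤ c)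
    (hmom : ∀ k : ℕ, ‖(∫ x, (x : ℂ) ^ k * exp (z.re * x * I) ∂μ) -
        ∫ x, (x : ℂ) ^ k * exp (z.re * x * I) ∂ν‖ ≤ ρ ^ (k + 1) * d) :
    ‖(∫ x, exp (z * x * I) ∂μ) - ∫ x, exp (z * x * I) ∂ν‖ ≤ ρ * Real.exp (ρ * r) * d := by
  have hdiff := (hasSum_integral_exp_mul_I hμ (hzr.trans hrc)).sub
    (hasSum_integral_exp_mul_I hν (hzr.trans hrc))
  simp_rw [← mul_sub] at hdiff
  rw [mul_right_comm]
  exact hdiff.norm_le_of_bounded ((Real.hasSum_pow_div_factorial (ρ * r)).mul_left (ρ * d))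
    fun k => norm_pow_div_factorial_mul_le hzr (hmom k)

theorem characteristic_function_strip_bound_general
    (μ μν : Measure ℝ)
    (c : ℝ) (hc : Real.exp (-1) < c)
    (hμ : Integrable (fun x => Real.exp (c * |x|)) μ)
    (hμν : Integrable (fun x => Real.exp (c * |x|)) μν)
    (ρ d : ℝ)
    (hmom : ∀ (k : ℕ) (t : ℝ), |t| < ρ →
      ‖(∫ x, (x : ℂ) ^ k * Complex.exp (t * x * Complex.I) ∂μ) -
          ∫ x, (x : ℂ) ^ k * Complex.exp (t * x * Complex.I) ∂μν‖ ≤ ρ ^ (k + 1) * d) :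
    ∀ z : ℂ, |z.re| < ρ → |z.im| < Real.exp (-1) →
      ‖(∫ x, Complex.exp (z * x * Complex.I) ∂μ) -
          ∫ x, Complex.exp (z * x * Complex.I) ∂μν‖ ≤
        ρ * Real.exp (ρ * Real.exp (-1)) * d :=
  fun z hre him =>
    norm_integral_exp_mul_I_sub_le hμ hμν him.le hc.le fun k => hmom k z.re hre

/-- Let `μ, μ_ν` be probability measures on `ℝ` with `∫ e^{c|x|} < ∞` for some
`c > e⁻¹` (so all moments exist and the characteristic functions extend analytically
to the strip `|Im z| < e⁻¹`). If for every `k ≥ 0` and every real `t` with `|t| < ρ`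
one has `|∫ x^k e^{itx} (μ − μ_ν)(dx)| ≤ ρ^{k+1}·d`, then for every `z = t + iy` with
`|t| < ρ` and `|y| < e⁻¹`,
`|∫ e^{izx} μ(dx) − ∫ e^{izx} μ_ν(dx)| ≤ ρ·e^{ρ/e}·d`. -/
theorem characteristic_function_strip_bound
    (μ μν : Measure ℝ) [IsProbabilityMeasure μ] [IsProbabilityMeasure μν]
    (c : ℝ) (hc : Real.exp (-1) < c)
    (hμ : Integrable (fun x => Real.exp (c * |x|)) μ)
    (hμν : Integrable (fun x => Real.exp (c * |x|)) μν)
    (ρ d : ℝ) (hρ : 0 < ρ) (hd : 0 ≤ d)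
    (hmom : ∀ (k : ℕ) (t : ℝ), |t| < ρ →
      ‖(∫ x, (x : ℂ) ^ k * Complex.exp (t * x * Complex.I) ∂μ) -
          ∫ x, (x : ℂ) ^ k * Complex.exp (t * x * Complex.I) ∂μν‖ ≤ ρ ^ (k + 1) * d) :
    ∀ z : ℂ, |z.re| < ρ → |z.im| < Real.exp (-1) →
      ‖(∫ x, Complex.exp (z * x * Complex.I) ∂μ) -
          ∫ x, Complex.exp (z * x * Complex.I) ∂μν‖ ≤
        ρ * Real.exp (ρ * Real.exp (-1)) * d :=
  characteristic_function_strip_bound_general μ μν c hc hμ hμν ρ d hmom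
end
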